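/- Let μ_1, μ_0 be the conditional distributions of X given S=1 and S=0, and suppose m_s := ∫ η(·,s) dμ_s > 0 for s ∈ {0,1}. Let η̂ : ℝ^d × {0,1} → [0,1] be measurable with m̂_s := ∫ η̂(·,s) dμ_s > 0, and let ν_1, ν_0 be probability measures on ℝ^d with ∫ η̂(·,s) dν_s > 0. Then for every classifier g, |ℙ(g(X,S)=1 | S=1,Y=1) − ℙ(g(X,S)=1 | S=0,Y=1)| ≤ Δ̂(g) + 2·∫|η(·,1) − η̂(·,1)| dμ_1 / m_1 + 2·∫|η(·,0) − η̂(·,0)| dμ_0 / m_0 + |∫ η̂(·,1)g(·,1) dμ_1 − ∫ η̂(·,1)g(·,1) dν_1| / m̂_1 + |∫ η̂(·,0)g(·,0) dμ_0 − ∫ η̂(·,0)g(·,0) dν_0| / m̂_0 + |∫ η̂(·,1) dν_1 − ∫ η̂(·,1) dμ_1| / m̂_1 + |∫ η̂(·,0) dν_0 − ∫ η̂(·,0) dμ_0| / m̂_0, where Δ̂(g) := |∫ η̂(·,1)g(·,1) dν_1 / ∫ η̂(·,1) dν_1 − ∫ η̂(·,0)g(·,0) dν_0 / ∫ η̂(·,0)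 dν_0|. -/

import Mathlib

/-!
By the regression identity, `ℙ(g = 1 | S = s, Y = 1)` is the ratio `𝔼_s[η g] / 𝔼_s[η]` of
integrals against the law of `X` given `S = s`. The theorem is then the triangle inequality through
the empirical ratios `∫ η̂ g dν_s / ∫ η̂ dν_s`, with each group compared to its empirical ratio by
passing through `𝔼_s[η̂ g] / 𝔼_s[η̂]` and the elementary estimate
`|a / m - b / n| ≤ (|a - b| + |n - m|) / m` for `0 ≤ b ≤ n`.
-/

open MeasureTheory ProbabilityTheory Set

lemma abs_div_sub_div_le {a b m n : ℝ} (hm : 0 < m) (hb : 0 ≤ b) (hbn : b ≤ n) :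
    |a / m - b / n| ≤ (|a - b| + |n - m|) / m := by
  have hn : 0 ≤ n := hb.trans hbn
  have hcancel : b / n * n = b := div_mul_cancel_of_imp fun h => le_antisymm (h ▸ hbn) hb
  have hq : |b / n| ≤ 1 := by
    rw [abs_of_nonneg (div_nonneg hb hn)]
    exact div_le_one_of_le₀ hbn hn
  have hsplit : a / m - b / n = (a - b) / m + b / n * ((n - m) / m) := by
    generalize b / n = q at hcancel ⊢
    subst hcancel
    field_simp
    ring
  rw [hsplit, add_div]
  refine (abs_add_le _ _).trans (add_le_add ?_ ?_)
  · rw [abs_div, abs_of_pos hm]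
  · rw [abs_mul, abs_div (n - m), abs_of_pos hm]
    exact mul_le_of_le_one_left (by positivity) hq

lemma abs_div_sub_div_le_of_approx {a a' b m m' n D : ℝ} (hm : 0 < m) (hm' : 0 < m')
    (ha : |a - a'| ≤ D) (hmm' : |m - m'| ≤ D) (ha' : 0 ≤ a') (ha'm' : a' ≤ m')
    (hb : 0 ≤ b) (hbn : b ≤ n) :
    |a / m - b / n| ≤ 2 * D / m + |a' - b| / m' + |n - m'| / m' :=
  calc |a / m - b / n| ≤ |a / m - a' / m'| + |a' / m' - b / n| := abs_sub_le _ _ _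
    _ ≤ (|a - a'| + |m' - m|) / m + (|a' - b| + |n - m'|) / m' :=
      add_le_add (abs_div_sub_div_le hm ha' ha'm') (abs_div_sub_div_le hm' hb hbn)
    _ ≤ (D + D) / m + (|a' - b| + |n - m'|) / m' := by
      rw [abs_sub_comm m' m]
      gcongr
    _ = 2 * D / m + |a' - b| / m' + |n - m'| / m' := by ring

lemma abs_sub_le_abs_sub_add_of_le {p₁ p₀ q₁ q₀ e₁ e₀ : ℝ} (h₁ : |p₁ - q₁| ≤ e₁)
    (h₀ : |p₀ - q₀| ≤ e₀) : |p₁ - p₀| ≤ |q₁ - q₀| + e₁ + e₀ := by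
  have := abs_sub_le p₁ q₁ p₀
  have := abs_sub_le q₁ q₀ p₀
  rw [abs_sub_comm] at h₀
  linarith

section WeightedIntegrals

variable {α : Type*} [MeasurableSpace α] {μ : Measure α} {f f' w : α → ℝ}

lemma integrable_of_mem_unitInterval [IsFiniteMeasure μ] (hf : AEStronglyMeasurable f μ)
    (hf01 : ∀ x, f x ∈ Icc (0 : ℝ) 1) : Integrable f μ :=
  .of_bound hf 1 <| ae_of_all _ fun x =>
    (Real.norm_eq_abs _).trans_le <| abs_le.2 ⟨by linarith [(hf01 x).1], (hf01 x).2⟩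

lemma MeasureTheory.Integrable.mul_unitInterval (hf : Integrable f μ)
    (hw : AEStronglyMeasurable w μ) (hw01 : ∀ x, w x ∈ Icc (0 : ℝ) 1) :
    Integrable (fun x => f x * w x) μ :=
  hf.mul_bdd hw <| ae_of_all _ fun x => by
    rw [Real.norm_eq_abs, abs_of_nonneg (hw01 x).1]
    exact (hw01 x).2

lemma integral_mul_unitInterval_le (hf : Integrable f μ) (hf0 : ∀ x, 0 ≤ f x)
    (hw01 : ∀ x, w x ∈ Icc (0 : ℝ) 1) : ∫ x, f x * w x ∂μ ≤ ∫ x, f x ∂μ :=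
  integral_mono_of_nonneg (ae_of_all _ fun x => mul_nonneg (hf0 x) (hw01 x).1) hf
    (ae_of_all _ fun x => mul_le_of_le_one_right (hf0 x) (hw01 x).2)

lemma abs_integral_mul_sub_integral_mul_le (hf : Integrable f μ) (hf' : Integrable f' μ)
    (hw : AEStronglyMeasurable w μ) (hw01 : ∀ x, w x ∈ Icc (0 : ℝ) 1) :
    |∫ x, f x * w x ∂μ - ∫ x, f' x * w x ∂μ| ≤ ∫ x, |f x - f' x| ∂μ := by
  rw [← integral_sub (hf.mul_unitInterval hw hw01) (hf'.mul_unitInterval hw hw01)]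
  refine abs_integral_le_integral_abs.trans <|
    integral_mono_of_nonneg (ae_of_all _ fun _ => abs_nonneg _) (hf.sub hf').abs
      (ae_of_all _ fun x => ?_)
  dsimp only
  rw [← sub_mul, abs_mul, abs_of_nonneg (hw01 x).1]
  exact mul_le_of_le_one_right (abs_nonneg _) (hw01 x).2

theorem abs_integral_mul_div_sub_integral_mul_div_le {β : Type*} [MeasurableSpace β]
    {ν : Measure β} {h v : β → ℝ} (hf : Integrable f μ) (hf' : Integrable f' μ)
    (hf'0 : ∀ x, 0 ≤ f' x) (hw : AEStronglyMeasurable w μ) (hw01 : ∀ x, w x ∈ Icc (0 : ℝ) 1)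
    (hm : 0 < ∫ x, f x ∂μ) (hm' : 0 < ∫ x, f' x ∂μ)
    (hh : Integrable h ν) (hh0 : ∀ y, 0 ≤ h y) (hv01 : ∀ y, v y ∈ Icc (0 : ℝ) 1) :
    |(∫ x, f x * w x ∂μ) / (∫ x, f x ∂μ) - (∫ y, h y * v y ∂ν) / (∫ y, h y ∂ν)|
      ≤ 2 * (∫ x, |f x - f' x| ∂μ) / (∫ x, f x ∂μ)
        + |(∫ x, f' x * w x ∂μ) - ∫ y, h y * v y ∂ν| / (∫ x, f' x ∂μ)
        + |(∫ y, h y ∂ν) - ∫ x, f' x ∂μ| / (∫ x, f' x ∂μ) :=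
  abs_div_sub_div_le_of_approx hm hm'
    (abs_integral_mul_sub_integral_mul_le hf hf' hw hw01)
    (abs_integral_le_integral_abs.trans_eq' (by rw [integral_sub hf hf']))
    (integral_nonneg fun x => mul_nonneg (hf'0 x) (hw01 x).1)
    (integral_mul_unitInterval_le hf' hf'0 hw01)
    (integral_nonneg fun y => mul_nonneg (hh0 y) (hv01 y).1)
    (integral_mul_unitInterval_le hh hh0 hv01)

end WeightedIntegrals

section Regression

variable {Ω E : Type*} [MeasurableSpace Ω] [MeasurableSpace E] {P : Measure Ω}
  {X : Ω → E} {S Y : Ω → Bool} {η : E → Bool → ℝ} {g : E → Bool → Bool}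

variable (P X S Y η) in
def IsRegressionFunction : Prop :=
  ∀ φ : E × Bool → ℝ, Measurable φ → (∃ C, ∀ z, |φ z| ≤ C) →
    ∫ ω, (if Y ω then (1:ℝ) else 0) * φ (X ω, S ω) ∂P = ∫ ω, η (X ω) (S ω) * φ (X ω, S ω) ∂P

lemma measureReal_label_inter_classifier_eq_setIntegral (hX : Measurable X) (hS : Measurable S)
    (hY : Measurable Y) (hreg : IsRegressionFunction P X S Y η)
    (hg : Measurable (fun p : E × Bool => g p.1 p.2)) (s : Bool) :
    P.real ({ω | S ω = s ∧ Y ω = true} ∩ {ω | g (X ω) (S ω) = true})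
      = ∫ ω in {ω | S ω = s}, η (X ω) s * (if g (X ω) s then 1 else 0) ∂P := by
  set B : Set (E × Bool) := {p | p.2 = s ∧ g p.1 p.2 = true}
  have hB : MeasurableSet B :=
    (measurable_snd (measurableSet_singleton s)).inter (hg (measurableSet_singleton true))
  have hSs : MeasurableSet {ω | S ω = s} := hS (measurableSet_singleton s)
  have hA : MeasurableSet {ω | S ω = s ∧ Y ω = true} :=
    hSs.inter (hY (measurableSet_singleton true))
  have hlabel : MeasurableSet ({ω | S ω = s ∧ Y ω = true} ∩ {ω | g (X ω) (S ω) = true}) :=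
    hA.inter ((hg.comp (hX.prodMk hS)) (measurableSet_singleton true))
  have hφ := hreg (B.indicator 1) (measurable_one.indicator hB)
    ⟨1, fun z => by by_cases hz : z ∈ B <;> simp [hz]⟩
  have hlhs : (fun ω => (if Y ω then (1:ℝ) else 0) * B.indicator 1 (X ω, S ω))
      = ({ω | S ω = s ∧ Y ω = true} ∩ {ω | g (X ω) (S ω) = true}).indicator 1 := by
    funext ω
    by_cases hy : Y ω <;> by_cases hs : S ω = s <;> simp [indicator_apply, B, hy, hs]
  have hrhs : (fun ω => η (X ω) (S ω) * B.indicator 1 (X ω, S ω))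
      = {ω | S ω = s}.indicator (fun ω => η (X ω) s * if g (X ω) s then 1 else 0) := by
    funext ω
    by_cases hs : S ω = s <;> simp [indicator_apply, B, hs]
  rwa [hlhs, hrhs, integral_indicator_one hlabel, integral_indicator hSs] at hφ

lemma cond_label_classifier_toReal_eq_div [IsFiniteMeasure P] (hX : Measurable X)
    (hS : Measurable S) (hY : Measurable Y)
    (hreg : IsRegressionFunction P X S Y η)
    (hg : Measurable (fun p : E × Bool => g p.1 p.2)) {s : Bool} (hPs : P {ω | S ω = s} ≠ 0) :
    (P[{ω | g (X ω) (S ω) = true} | {ω | S ω = s ∧ Y ω = true}]).toReal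
      = (∫ ω, η (X ω) s * (if g (X ω) s then (1:ℝ) else 0) ∂P[|{ω | S ω = s}])
        / ∫ ω, η (X ω) s ∂P[|{ω | S ω = s}] := by
  -- the denominator is the numerator for the classifier that always answers `true`
  have hden := measureReal_label_inter_classifier_eq_setIntegral hX hS hY hreg
    (g := fun _ _ => true) measurable_const s
  simp only [ofPred_true, inter_univ, if_true, mul_one] at hden
  have hc : (P {ω | S ω = s})⁻¹.toReal ≠ 0 :=
    ENNReal.toReal_ne_zero.2 ⟨ENNReal.inv_ne_zero.2 (measure_ne_top P _), ENNReal.inv_ne_top.2 hPs⟩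
  have hA : MeasurableSet {ω | S ω = s ∧ Y ω = true} :=
    (hS (measurableSet_singleton s)).inter (hY (measurableSet_singleton true))
  rw [cond_apply hA, ENNReal.toReal_mul, ENNReal.toReal_inv, ← measureReal_def,
    ← measureReal_def, measureReal_label_inter_classifier_eq_setIntegral hX hS hY hreg hg, hden,
    ProbabilityTheory.cond, integral_smul_measure, integral_smul_measure, smul_eq_mul,
    smul_eq_mul, mul_div_mul_left _ _ hc, inv_mul_eq_div]

theorem abs_cond_label_classifier_sub_div_le [IsFiniteMeasure P] (hX : Measurable X)
    (hS : Measurable S) (hY : Measurable Y)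
    (hηm : Measurable (fun p : E × Bool => η p.1 p.2)) (hη01 : ∀ x s, η x s ∈ Icc (0:ℝ) 1)
    (hreg : IsRegressionFunction P X S Y η)
    {ηh : E → Bool → ℝ} (hηhm : Measurable (fun p : E × Bool => ηh p.1 p.2))
    (hηh01 : ∀ x s, ηh x s ∈ Icc (0:ℝ) 1) {ν : Measure E} [IsFiniteMeasure ν]
    (hg : Measurable (fun p : E × Bool => g p.1 p.2)) {s : Bool} (hPs : P {ω | S ω = s} ≠ 0)
    (hm : 0 < ∫ ω, η (X ω) s ∂P[|{ω | S ω = s}])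
    (hmh : 0 < ∫ ω, ηh (X ω) s ∂P[|{ω | S ω = s}]) :
    |(P[{ω | g (X ω) (S ω) = true} | {ω | S ω = s ∧ Y ω = true}]).toReal
        - (∫ x, ηh x s * (if g x s then (1:ℝ) else 0) ∂ν) / (∫ x, ηh x s ∂ν)|
      ≤ 2 * (∫ ω, |η (X ω) s - ηh (X ω) s| ∂P[|{ω | S ω = s}])
          / (∫ ω, η (X ω) s ∂P[|{ω | S ω = s}])
        + |(∫ ω, ηh (X ω) s * (if g (X ω) s then (1:ℝ) else 0) ∂P[|{ω | S ω = s}])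
            - ∫ x, ηh x s * (if g x s then (1:ℝ) else 0) ∂ν|
          / (∫ ω, ηh (X ω) s ∂P[|{ω | S ω = s}])
        + |(∫ x, ηh x s ∂ν) - ∫ ω, ηh (X ω) s ∂P[|{ω | S ω = s}]|
          / (∫ ω, ηh (X ω) s ∂P[|{ω | S ω = s}]) := by
  have hgs : Measurable fun x => if g x s then (1:ℝ) else 0 :=
    (Measurable.of_discrete (f := fun b : Bool => if b then (1:ℝ) else 0)).comp
      (hg.comp (measurable_id.prodMk measurable_const))
  have hgs01 : ∀ x, (if g x s then (1:ℝ) else 0) ∈ Icc 0 1 := fun x => by split <;> simp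
  have hηs : Measurable fun x => η x s := hηm.comp (measurable_id.prodMk measurable_const)
  have hηhs : Measurable fun x => ηh x s := hηhm.comp (measurable_id.prodMk measurable_const)
  rw [cond_label_classifier_toReal_eq_div hX hS hY hreg hg hPs]
  exact abs_integral_mul_div_sub_integral_mul_div_le
    (integrable_of_mem_unitInterval (hηs.comp hX).aestronglyMeasurable fun _ => hη01 _ s)
    (integrable_of_mem_unitInterval (hηhs.comp hX).aestronglyMeasurable fun _ => hηh01 _ s)
    (fun _ => (hηh01 _ s).1) (hgs.comp hX).aestronglyMeasurable (fun _ => hgs01 _) hm hmh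
    (integrable_of_mem_unitInterval hηhs.aestronglyMeasurable fun x => hηh01 x s)
    (fun x => (hηh01 x s).1) hgs01

end Regression

theorem stmt_6_general {d : ℕ} {Ω : Type*} [MeasurableSpace Ω]
    (P : Measure Ω) [IsProbabilityMeasure P]
    (X : Ω → (Fin d → ℝ)) (S Y : Ω → Bool)
    (hX : Measurable X) (hS : Measurable S) (hY : Measurable Y)
    (hYS : ∀ s : Bool, 0 < P {ω | Y ω = true ∧ S ω = s})
    (η : (Fin d → ℝ) → Bool → ℝ)
    (hηm : Measurable (fun p : (Fin d → ℝ) × Bool => η p.1 p.2))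
    (hη01 : ∀ x s, η x s ∈ Icc (0:ℝ) 1)
    (hreg : ∀ φ : (Fin d → ℝ) × Bool → ℝ, Measurable φ → (∃ C, ∀ z, |φ z| ≤ C) →
      ∫ ω, (if Y ω then (1:ℝ) else 0) * φ (X ω, S ω) ∂P
        = ∫ ω, η (X ω) (S ω) * φ (X ω, S ω) ∂P)
    -- conditional means of the true regression function
    (m1 m0 : ℝ)
    (hm1 : m1 = ∫ ω, η (X ω) true ∂(ProbabilityTheory.cond P {ω | S ω = true}))
    (hm0 : m0 = ∫ ω, η (X ω) false ∂(ProbabilityTheory.cond P {ω | S ω = false}))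
    (hm1pos : 0 < m1) (hm0pos : 0 < m0)
    -- the estimator
    (ηh : (Fin d → ℝ) → Bool → ℝ)
    (hηhm : Measurable (fun p : (Fin d → ℝ) × Bool => ηh p.1 p.2))
    (hηh01 : ∀ x s, ηh x s ∈ Icc (0:ℝ) 1)
    (mh1 mh0 : ℝ)
    (hmh1 : mh1 = ∫ ω, ηh (X ω) true ∂(ProbabilityTheory.cond P {ω | S ω = true}))
    (hmh0 : mh0 = ∫ ω, ηh (X ω) false ∂(ProbabilityTheory.cond P {ω | S ω = false}))
    (hmh1pos : 0 < mh1) (hmh0pos : 0 < mh0)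
    -- the auxiliary (empirical) measures
    (ν1 ν0 : Measure (Fin d → ℝ))
    [IsProbabilityMeasure ν1] [IsProbabilityMeasure ν0]
    -- the classifier
    (g : (Fin d → ℝ) → Bool → Bool)
    (hg : Measurable (fun p : (Fin d → ℝ) × Bool => g p.1 p.2)) :
    |(ProbabilityTheory.cond P {ω | S ω = true ∧ Y ω = true}
        {ω | g (X ω) (S ω) = true}).toReal
      - (ProbabilityTheory.cond P {ω | S ω = false ∧ Y ω = true}
          {ω | g (X ω) (S ω) = true}).toReal|
      ≤ |(∫ x, ηh x true * (if g x true then (1:ℝ) else 0) ∂ν1) / (∫ x, ηh x true ∂ν1)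
          - (∫ x, ηh x false * (if g x false then (1:ℝ) else 0) ∂ν0)
              / (∫ x, ηh x false ∂ν0)|
        + 2 * (∫ ω, |η (X ω) true - ηh (X ω) true|
            ∂(ProbabilityTheory.cond P {ω | S ω = true})) / m1
        + 2 * (∫ ω, |η (X ω) false - ηh (X ω) false|
            ∂(ProbabilityTheory.cond P {ω | S ω = false})) / m0
        + |(∫ ω, ηh (X ω) true * (if g (X ω) true then (1:ℝ) else 0)
              ∂(ProbabilityTheory.cond P {ω | S ω = true}))
            - (∫ x, ηh x true * (if g x true then (1:ℝ) else 0) ∂ν1)| / mh1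
        + |(∫ ω, ηh (X ω) false * (if g (X ω) false then (1:ℝ) else 0)
              ∂(ProbabilityTheory.cond P {ω | S ω = false}))
            - (∫ x, ηh x false * (if g x false then (1:ℝ) else 0) ∂ν0)| / mh0
        + |(∫ x, ηh x true ∂ν1)
            - (∫ ω, ηh (X ω) true ∂(ProbabilityTheory.cond P {ω | S ω = true}))| / mh1
        + |(∫ x, ηh x false ∂ν0)
            - (∫ ω, ηh (X ω) false ∂(ProbabilityTheory.cond P {ω | S ω = false}))| / mh0 := by
  subst hm1 hm0 hmh1 hmh0
  have hPs : ∀ s, P {ω | S ω = s} ≠ 0 := fun s =>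
    ((hYS s).trans_le (measure_mono fun ω h => h.2)).ne'
  have h1 := abs_cond_label_classifier_sub_div_le hX hS hY hηm hη01 hreg hηhm hηh01
    (ν := ν1) hg (hPs true) hm1pos hmh1pos
  have h0 := abs_cond_label_classifier_sub_div_le hX hS hY hηm hη01 hreg hηhm hηh01
    (ν := ν0) hg (hPs false) hm0pos hmh0pos
  linarith [abs_sub_le_abs_sub_add_of_le h1 h0]

theorem stmt_6 {d : ℕ} {Ω : Type*} [MeasurableSpace Ω]
    (P : Measure Ω) [IsProbabilityMeasure P]
    (X : Ω → (Fin d → ℝ)) (S Y : Ω → Bool)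
    (hX : Measurable X) (hS : Measurable S) (hY : Measurable Y)
    (hSnd : 0 < P {ω | S ω = true} ∧ P {ω | S ω = true} < 1)
    (hYS : ∀ s : Bool, 0 < P {ω | Y ω = true ∧ S ω = s})
    (η : (Fin d → ℝ) → Bool → ℝ)
    (hηm : Measurable (fun p : (Fin d → ℝ) × Bool => η p.1 p.2))
    (hη01 : ∀ x s, η x s ∈ Icc (0:ℝ) 1)
    (hreg : ∀ φ : (Fin d → ℝ) × Bool → ℝ, Measurable φ → (∃ C, ∀ z, |φ z| ≤ C) →
      ∫ ω, (if Y ω then (1:ℝ) else 0) * φ (X ω, S ω) ∂P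
        = ∫ ω, η (X ω) (S ω) * φ (X ω, S ω) ∂P)
    -- conditional means of the true regression function
    (m1 m0 : ℝ)
    (hm1 : m1 = ∫ ω, η (X ω) true ∂(ProbabilityTheory.cond P {ω | S ω = true}))
    (hm0 : m0 = ∫ ω, η (X ω) false ∂(ProbabilityTheory.cond P {ω | S ω = false}))
    (hm1pos : 0 < m1) (hm0pos : 0 < m0)
    -- the estimator
    (ηh : (Fin d → ℝ) → Bool → ℝ)
    (hηhm : Measurable (fun p : (Fin d → ℝ) × Bool => ηh p.1 p.2))
    (hηh01 : ∀ x s, ηh x s ∈ Icc (0:ℝ) 1)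
    (mh1 mh0 : ℝ)
    (hmh1 : mh1 = ∫ ω, ηh (X ω) true ∂(ProbabilityTheory.cond P {ω | S ω = true}))
    (hmh0 : mh0 = ∫ ω, ηh (X ω) false ∂(ProbabilityTheory.cond P {ω | S ω = false}))
    (hmh1pos : 0 < mh1) (hmh0pos : 0 < mh0)
    -- the auxiliary (empirical) measures
    (ν1 ν0 : Measure (Fin d → ℝ))
    [IsProbabilityMeasure ν1] [IsProbabilityMeasure ν0]
    (hν1pos : 0 < ∫ x, ηh x true ∂ν1) (hν0pos : 0 < ∫ x, ηh x false ∂ν0)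
    -- the classifier
    (g : (Fin d → ℝ) → Bool → Bool)
    (hg : Measurable (fun p : (Fin d → ℝ) × Bool => g p.1 p.2)) :
    |(ProbabilityTheory.cond P {ω | S ω = true ∧ Y ω = true}
        {ω | g (X ω) (S ω) = true}).toReal
      - (ProbabilityTheory.cond P {ω | S ω = false ∧ Y ω = true}
          {ω | g (X ω) (S ω) = true}).toReal|
      ≤ |(∫ x, ηh x true * (if g x true then (1:ℝ) else 0) ∂ν1) / (∫ x, ηh x true ∂ν1)
          - (∫ x, ηh x false * (if g x false then (1:ℝ) else 0) ∂ν0)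
              / (∫ x, ηh x false ∂ν0)|
        + 2 * (∫ ω, |η (X ω) true - ηh (X ω) true|
            ∂(ProbabilityTheory.cond P {ω | S ω = true})) / m1
        + 2 * (∫ ω, |η (X ω) false - ηh (X ω) false|
            ∂(ProbabilityTheory.cond P {ω | S ω = false})) / m0
        + |(∫ ω, ηh (X ω) true * (if g (X ω) true then (1:ℝ) else 0)
              ∂(ProbabilityTheory.cond P {ω | S ω = true}))
            - (∫ x, ηh x true * (if g x true then (1:ℝ) else 0) ∂ν1)| / mh1
        + |(∫ ω, ηh (X ω) false * (if g (X ω) false then (1:ℝ) else 0)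
              ∂(ProbabilityTheory.cond P {ω | S ω = false}))
            - (∫ x, ηh x false * (if g x false then (1:ℝ) else 0) ∂ν0)| / mh0
        + |(∫ x, ηh x true ∂ν1)
            - (∫ ω, ηh (X ω) true ∂(ProbabilityTheory.cond P {ω | S ω = true}))| / mh1
        + |(∫ x, ηh x false ∂ν0)
            - (∫ ω, ηh (X ω) false ∂(ProbabilityTheory.cond P {ω | S ω = false}))| / mh0 :=
  stmt_6_general P X S Y hX hS hY hYS η hηm hη01 hreg m1 m0 hm1 hm0 hm1pos hm0pos ηh hηhm hηh01 mh1
    mh0 hmh1 hmh0 hmh1pos hmh0pos ν1 ν0 g hg
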